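/- For any f ∈ V, the orbit-averaged function 𝒪f is the μ-a.e. unique solution of the least-squares problem over the 𝒢-invariant functions: 𝒪f = argmin_{s ∈ S} ‖f − s‖_μ², where S = {s ∈ V : s is 𝒢-invariant}. That is, ‖f − 𝒪f‖_μ ≤ ‖f − s‖_μ for all s ∈ S, with equality only if s = 𝒪f μ-a.e. -/

import Mathlib

/-!
The orbit average is the orthogonal projection of `L²(μ)` onto the invariant functions.
It is invariant because `λ` is right-invariant, and square integrable by Jensen's inequality
on each orbit. For an invariant `h`, Fubini together with the invariance of `μ` and of `h` gives
`∫ ⟪𝒪f, h⟫ dμ = ∫ ⟪f, h⟫ dμ`, so `f - 𝒪f` is orthogonal to `𝒪f - s` for every invariant `s`,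
and Pythagoras gives `‖f - s‖² = ‖f - 𝒪f‖² + ‖𝒪f - s‖²`.
-/

open MeasureTheory
open scoped InnerProductSpace

/-- The orbit-averaging operator `𝒪`: `(𝒪 f)(x) = ∫_𝒢 f(g • x) dλ(g)`. -/
noncomputable def Oavg {G X : Type*} [Group G] [MeasurableSpace G] [MulAction G X] {k : ℕ}
    (lam : Measure G)
    (f : X → EuclideanSpace ℝ (Fin k)) : X → EuclideanSpace ℝ (Fin k) :=
  fun x => ∫ g, f (g • x) ∂lam

section Orthogonality

variable {α E : Type*} {mα : MeasurableSpace α} {μ : Measure α}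
  [NormedAddCommGroup E] [InnerProductSpace ℝ E]

lemma MeasureTheory.MemLp.integrable_inner {u v : α → E} (hu : MemLp u 2 μ) (hv : MemLp v 2 μ) :
    Integrable (fun x => ⟪u x, v x⟫_ℝ) μ :=
  (L2.integrable_inner (hu.toLp u) (hv.toLp v)).congr <| by
    filter_upwards [hu.coeFn_toLp, hv.coeFn_toLp] with x hux hvx
    rw [hux, hvx]

lemma toReal_eLpNorm_add_sq_of_integral_inner_eq_zero {u v : α → E} (hu : MemLp u 2 μ)
    (hv : MemLp v 2 μ) (huv : ∫ x, ⟪u x, v x⟫_ℝ ∂μ = 0) :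
    (eLpNorm (u + v) 2 μ).toReal ^ 2 =
      (eLpNorm u 2 μ).toReal ^ 2 + (eLpNorm v 2 μ).toReal ^ 2 := by
  have hperp : ⟪hu.toLp u, hv.toLp v⟫_ℝ = 0 := by
    rw [L2.inner_def, ← huv]
    refine integral_congr_ae ?_
    filter_upwards [hu.coeFn_toLp, hv.coeFn_toLp] with x hux hvx
    rw [hux, hvx]
  simpa only [← MemLp.toLp_add, Lp.norm_toLp, ← sq] using
    norm_add_sq_eq_norm_sq_add_norm_sq_real hperp

lemma eLpNorm_le_eLpNorm_add_of_integral_inner_eq_zero {u v : α → E} (hu : MemLp u 2 μ)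
    (hv : MemLp v 2 μ) (huv : ∫ x, ⟪u x, v x⟫_ℝ ∂μ = 0) :
    eLpNorm u 2 μ ≤ eLpNorm (u + v) 2 μ ∧ (eLpNorm (u + v) 2 μ = eLpNorm u 2 μ → v =ᵐ[μ] 0) := by
  have hpyth := toReal_eLpNorm_add_sq_of_integral_inner_eq_zero hu hv huv
  refine ⟨?_, fun heq => ?_⟩
  · rw [← ENNReal.toReal_le_toReal hu.eLpNorm_ne_top (hu.add hv).eLpNorm_ne_top]
    exact le_of_sq_le_sq (by nlinarith [sq_nonneg (eLpNorm v 2 μ).toReal]) ENNReal.toReal_nonneg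
  · rw [heq, left_eq_add, sq_eq_zero_iff, ENNReal.toReal_eq_zero_iff] at hpyth
    rw [← eLpNorm_eq_zero_iff hv.1 two_ne_zero]
    exact hpyth.resolve_right hv.eLpNorm_ne_top

end Orthogonality

section FiberIntegral

variable {α β E : Type*} {mα : MeasurableSpace α} {mβ : MeasurableSpace β}
  {μ : Measure α} {ν : Measure β} [NormedAddCommGroup E]

lemma MeasureTheory.MemLp.ae_memLp_prod_left [SFinite ν] [SFinite μ] {Φ : β × α → E}
    (hΦ : MemLp Φ 2 (ν.prod μ)) : ∀ᵐ x ∂μ, MemLp (fun g => Φ (g, x)) 2 ν := by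
  filter_upwards [hΦ.1.prod_swap.prodMk_left,
    ((memLp_two_iff_integrable_sq_norm hΦ.1).1 hΦ).prod_left_ae] with x hmeas hsq
  exact (memLp_two_iff_integrable_sq_norm hmeas).2 hsq

variable [NormedSpace ℝ E] [CompleteSpace E]

lemma sq_norm_integral_le_integral_sq_norm [IsProbabilityMeasure ν] {u : β → E}
    (hu : MemLp u 2 ν) : ‖∫ g, u g ∂ν‖ ^ 2 ≤ ∫ g, ‖u g‖ ^ 2 ∂ν :=
  (convexOn_univ_norm.pow (fun _ _ => norm_nonneg _) 2).map_integral_le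
    (continuous_norm.pow 2).continuousOn isClosed_univ (by simp) (hu.integrable one_le_two)
    ((memLp_two_iff_integrable_sq_norm hu.1).1 hu)

lemma MeasureTheory.MemLp.integral_prod_left [IsProbabilityMeasure ν] [SFinite μ]
    {Φ : β × α → E} (hΦ : MemLp Φ 2 (ν.prod μ)) :
    MemLp (fun x => ∫ g, Φ (g, x) ∂ν) 2 μ := by
  have hmeas : AEStronglyMeasurable (fun x => ∫ g, Φ (g, x) ∂ν) μ :=
    hΦ.1.prod_swap.integral_prod_right'
  refine (memLp_two_iff_integrable_sq_norm hmeas).2 <|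
    ((memLp_two_iff_integrable_sq_norm hΦ.1).1 hΦ).integral_prod_right.mono' (hmeas.norm.pow 2) ?_
  filter_upwards [hΦ.ae_memLp_prod_left] with x hx
  rw [Real.norm_of_nonneg (sq_nonneg _)]
  exact sq_norm_integral_le_integral_sq_norm hx

end FiberIntegral

section OrbitAverage

variable {G X : Type*} [Group G] [MeasurableSpace G] [MeasurableSpace X] [MulAction G X]
  [MeasurableSMul₂ G X] {k : ℕ} (lam : Measure G) [IsProbabilityMeasure lam]
  {μ : Measure X} [SMulInvariantMeasure G X μ] [SFinite μ]

lemma measurePreserving_smul_prod :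
    MeasurePreserving (fun p : G × X => p.1 • p.2) (lam.prod μ) μ := by
  have hact : Measurable fun p : G × X => p.1 • p.2 := measurable_fst.smul measurable_snd
  refine ⟨hact, Measure.ext fun A hA => ?_⟩
  rw [Measure.map_apply hact hA, Measure.prod_apply (hact hA)]
  have hfiber (g : G) : μ (Prod.mk g ⁻¹' ((fun p : G × X => p.1 • p.2) ⁻¹' A)) = μ A :=
    SMulInvariantMeasure.measure_preimage_smul g hA
  rw [lintegral_congr hfiber, lintegral_const, measure_univ, mul_one]

lemma Oavg_congr_ae {f f' : X → EuclideanSpace ℝ (Fin k)} (hff' : f =ᵐ[μ] f') :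
    Oavg lam f =ᵐ[μ] Oavg lam f' := by
  have hprod : (fun p : X × G => f (p.2 • p.1)) =ᵐ[μ.prod lam] fun p => f' (p.2 • p.1) :=
    ((measurePreserving_smul_prod lam).comp
      Measure.measurePreserving_swap).quasiMeasurePreserving.ae_eq_comp hff'
  filter_upwards [Measure.ae_ae_of_ae_prod hprod] with x hx
  exact integral_congr_ae hx

lemma Oavg_smul [lam.IsMulRightInvariant] {f : X → EuclideanSpace ℝ (Fin k)}
    (hf : StronglyMeasurable f) (g₀ : G) (x : X) : Oavg lam f (g₀ • x) = Oavg lam f x := by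
  -- `G` need not be a measurable group: a map that is not a.e.-measurable pushes `lam` to `0`.
  have hmul : AEMeasurable (· * g₀) lam := by
    by_contra hnot
    exact IsProbabilityMeasure.ne_zero lam <| by
      rw [← Measure.map_of_not_aemeasurable hnot, map_mul_right_eq_self lam g₀]
  have horbit : AEStronglyMeasurable (fun g : G => f (g • x)) (lam.map (· * g₀)) := by
    rw [map_mul_right_eq_self lam g₀]
    exact (hf.comp_measurable (measurable_id.smul_const x)).aestronglyMeasurable
  calc Oavg lam f (g₀ • x) = ∫ g, f ((g * g₀) • x) ∂lam := by simp only [Oavg, mul_smul]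
    _ = ∫ g, f (g • x) ∂(lam.map (· * g₀)) := (integral_map hmul horbit).symm
    _ = Oavg lam f x := by rw [map_mul_right_eq_self lam g₀]; rfl

lemma memLp_Oavg {f : X → EuclideanSpace ℝ (Fin k)} (hf : MemLp f 2 μ) :
    MemLp (Oavg lam f) 2 μ :=
  (hf.comp_measurePreserving (measurePreserving_smul_prod lam)).integral_prod_left

lemma integral_inner_Oavg {f h : X → EuclideanSpace ℝ (Fin k)} (hf : MemLp f 2 μ)
    (hh : MemLp h 2 μ) (hh_inv : ∀ (g : G) (x : X), h (g • x) = h x) :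
    ∫ x, ⟪Oavg lam f x, h x⟫_ℝ ∂μ = ∫ x, ⟪f x, h x⟫_ℝ ∂μ := by
  have hfact : MemLp (fun p : G × X => f (p.1 • p.2)) 2 (lam.prod μ) :=
    hf.comp_measurePreserving (measurePreserving_smul_prod lam)
  have hprod : Integrable (fun p : G × X => ⟪f (p.1 • p.2), h p.2⟫_ℝ) (lam.prod μ) :=
    hfact.integrable_inner (hh.comp_measurePreserving measurePreserving_snd)
  calc ∫ x, ⟪Oavg lam f x, h x⟫_ℝ ∂μ = ∫ x, ∫ g, ⟪f (g • x), h x⟫_ℝ ∂lam ∂μ := by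
        refine integral_congr_ae ?_
        filter_upwards [hfact.ae_memLp_prod_left] with x hx
        rw [real_inner_comm, Oavg, ← integral_inner (hx.integrable one_le_two)]
        simp_rw [real_inner_comm _ (h x)]
    _ = ∫ g, ∫ x, ⟪f (g • x), h (g • x)⟫_ℝ ∂μ ∂lam := by
        simp_rw [hh_inv]
        exact integral_integral_swap (f := fun x g => ⟪f (g • x), h x⟫_ℝ) hprod.swap
    _ = ∫ x, ⟪f x, h x⟫_ℝ ∂μ := by
        simp_rw [integral_smul_eq_self (fun x => ⟪f x, h x⟫_ℝ)]
        rw [integral_const, probReal_univ, one_smul]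

lemma integral_inner_sub_Oavg_eq_zero {f h : X → EuclideanSpace ℝ (Fin k)} (hf : MemLp f 2 μ)
    (hh : MemLp h 2 μ) (hh_inv : ∀ (g : G) (x : X), h (g • x) = h x) :
    ∫ x, ⟪f x - Oavg lam f x, h x⟫_ℝ ∂μ = 0 := by
  simp_rw [inner_sub_left]
  rw [integral_sub (hf.integrable_inner hh) ((memLp_Oavg lam hf).integrable_inner hh),
    integral_inner_Oavg lam hf hh hh_inv, sub_self]

end OrbitAverage

theorem stmt5_general {G X : Type*} [Group G] [MeasurableSpace G] [MeasurableSpace X] [MulAction G X]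
    {k : ℕ}
    (lam : Measure G) [IsProbabilityMeasure lam]
    (hrinv : ∀ g : G, lam.map (fun h => h * g) = lam)
    (hact : Measurable fun p : G × X => p.1 • p.2)
    (μ : Measure X) [SigmaFinite μ]
    (hμinv : ∀ g : G, μ.map (fun x => g • x) = μ)
    (f : X → EuclideanSpace ℝ (Fin k)) (hf : MemLp f 2 μ) :
    ∀ s : X → EuclideanSpace ℝ (Fin k), MemLp s 2 μ →
      (∀ (g : G) (x : X), s (g • x) = s x) →
      eLpNorm (f - Oavg lam f) 2 μ ≤ eLpNorm (f - s) 2 μ ∧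
      (eLpNorm (f - s) 2 μ = eLpNorm (f - Oavg lam f) 2 μ → s =ᵐ[μ] Oavg lam f) := by
  intro s hs hs_inv
  have : MeasurableSMul₂ G X := ⟨hact⟩
  have : SMulInvariantMeasure G X μ :=
    ⟨fun g A hA => by rw [← Measure.map_apply (measurable_const_smul g) hA, hμinv g]⟩
  have : lam.IsMulRightInvariant := ⟨hrinv⟩
  -- `Oavg_smul` needs a strongly measurable representative of `f`.
  obtain ⟨f₀, hf₀_meas, hff₀⟩ : ∃ f₀, StronglyMeasurable f₀ ∧ f =ᵐ[μ] f₀ :=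
    ⟨_, hf.1.stronglyMeasurable_mk, hf.1.ae_eq_mk⟩
  have hf₀ : MemLp f₀ 2 μ := hf.ae_eq hff₀
  have hO : Oavg lam f =ᵐ[μ] Oavg lam f₀ := Oavg_congr_ae lam hff₀
  have hperp : ∫ x, ⟪f₀ x - Oavg lam f₀ x, Oavg lam f₀ x - s x⟫_ℝ ∂μ = 0 :=
    integral_inner_sub_Oavg_eq_zero lam hf₀ ((memLp_Oavg lam hf₀).sub hs) fun g x => by
      rw [Oavg_smul lam hf₀_meas, hs_inv]
  obtain ⟨hle, heq⟩ := eLpNorm_le_eLpNorm_add_of_integral_inner_eq_zero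
    (hf₀.sub (memLp_Oavg lam hf₀)) ((memLp_Oavg lam hf₀).sub hs) hperp
  rw [sub_add_sub_cancel] at hle heq
  rw [eLpNorm_congr_ae (hff₀.sub hO), eLpNorm_congr_ae (hff₀.sub (ae_eq_refl s))]
  refine ⟨hle, fun h => ?_⟩
  filter_upwards [heq h, hO] with x hx hOx
  rw [hOx, eq_comm, ← sub_eq_zero]
  exact hx

/-- (Feature averaging as a least-squares problem.) For any `f ∈ V`, the
orbit-averaged function `𝒪f` is the μ-a.e. unique solution of the least-squares problem over
the `𝒢`-invariant functions `S`: `‖f − 𝒪f‖_μ ≤ ‖f − s‖_μ` for all `s ∈ S`, with equality only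
if `s = 𝒪f` μ-a.e. -/
theorem stmt5 {G X : Type*} [Group G] [MeasurableSpace G] [MeasurableSpace X] [MulAction G X]
    {k : ℕ}
    (lam : Measure G) [IsProbabilityMeasure lam]
    (hlinv : ∀ g : G, lam.map (fun h => g * h) = lam)
    (hrinv : ∀ g : G, lam.map (fun h => h * g) = lam)
    (hact : Measurable fun p : G × X => p.1 • p.2)
    (μ : Measure X) [SigmaFinite μ]
    (hμinv : ∀ g : G, μ.map (fun x => g • x) = μ)
    (f : X → EuclideanSpace ℝ (Fin k)) (hf : MemLp f 2 μ) :
    ∀ s : X → EuclideanSpace ℝ (Fin k), MemLp s 2 μ →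
      (∀ (g : G) (x : X), s (g • x) = s x) →
      eLpNorm (f - Oavg lam f) 2 μ ≤ eLpNorm (f - s) 2 μ ∧
      (eLpNorm (f - s) 2 μ = eLpNorm (f - Oavg lam f) 2 μ → s =ᵐ[μ] Oavg lam f) :=
  stmt5_general lam hrinv hact μ hμinv f hf
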